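/- Let G be a connected graph with minimum degree at least 3 and v any vertex. Then every bridge edge of G is revealed by v. -/

import Mathlib

open SimpleGraph

variable {V : Type*}

/-- A walk is non-backtracking if no vertex equals the vertex two steps later. -/
def NonBacktracking {G : SimpleGraph V} {u v : V} (p : G.Walk u v) : Prop :=
  ∀ i : ℕ, i + 2 < p.support.length → p.support[i]? ≠ p.support[i + 2]?

/-- The weight of a walk: the sum of the weights of its edges, with multiplicity. -/
def walkWeight {G : SimpleGraph V} (F : Sym2 V → ℝ) {u v : V} (p : G.Walk u v) : ℝ :=
  (p.edges.map F).sum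

/-- An edge `e` is revealed by a set `S` of vertices if an integer combination of weights of
closed non-backtracking walks from vertices of `S` equals a nonzero multiple of the weight
of `e`, for every weight function. -/
def RevealedBySet (G : SimpleGraph V) (S : Set V) (e : Sym2 V) : Prop :=
  ∃ (l : ℕ) (w : Fin l → V) (W : ∀ i, G.Walk (w i) (w i)) (c : Fin l → ℤ) (ce : ℤ),
    (∀ i, w i ∈ S) ∧ (∀ i, NonBacktracking (W i)) ∧ (∀ i, c i ≠ 0) ∧ ce ≠ 0 ∧
    ∀ F : Sym2 V → ℝ, ∑ i, (c i : ℝ) * walkWeight F (W i) = (ce : ℝ) * F e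

/-- A walk `W` is revealed by the vertex `v`. -/
def WalkRevealedBy (G : SimpleGraph V) (v : V) {a b : V} (W : G.Walk a b) : Prop :=
  ∃ (l : ℕ) (Ws : Fin l → G.Walk v v) (c : Fin l → ℤ) (cW : ℤ),
    (∀ i, NonBacktracking (Ws i)) ∧ (∀ i, c i ≠ 0) ∧ cW ≠ 0 ∧
    ∀ F : Sym2 V → ℝ, ∑ i, (c i : ℝ) * walkWeight F (Ws i) = (cW : ℝ) * walkWeight F W

/-- `G` is odometric: every edge is revealed by every single vertex. -/
def Odometric (G : SimpleGraph V) : Prop :=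
  ∀ v : V, ∀ e ∈ G.edgeSet, RevealedBySet G {v} e

/-- `u` is a cut vertex of `G`. -/
def IsCutVertex (G : SimpleGraph V) (u : V) : Prop :=
  G.Connected ∧ ¬ (G.induce {x : V | x ≠ u}).Connected

/-- The induced subgraph on `B` is 2-connected. -/
def TwoConnectedOn (G : SimpleGraph V) (B : Set V) : Prop :=
  3 ≤ B.ncard ∧ (G.induce B).Connected ∧ ∀ u ∈ B, (G.induce (B \ {u})).Connected

/-- `B` is a maximal 2-connected block of `G`. -/
def IsBlock (G : SimpleGraph V) (B : Set V) : Prop :=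
  TwoConnectedOn G B ∧ ∀ B', B ⊆ B' → TwoConnectedOn G B' → B' = B

/-!
Write the edge as `ab`, oriented so that some path `P` from `v` to `a` avoids `b`. Every vertex
of `G - ab` has degree at least `2`, so closing up a longest path produces, at `a` and at `b`,
non-backtracking closed walks that neither start nor end with the edge `ab`. For such a loop `L`
at `b`, the walk `W L = P · ab · L · ba · P⁻¹` is non-backtracking of weight
`2 F(P) + 2 F(ab) + F(L)`. Taking loops `A₁, A₂` at `a` and `B₁, B₂` at `b`, and
`M A = B₁ · ba · A · ab · B₂`, we get
`- W (B₁ B₂) + W (M A₁) + W (M A₂) - W (M (A₁ A₂)) = 2 ab`.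
-/

open SimpleGraph Walk

namespace SimpleGraph.Walk

variable {G : SimpleGraph V} {u v w x y : V}

theorem snd_append_of_not_nil {p : G.Walk u v} (q : G.Walk v w) (hp : ¬ p.Nil) :
    (p.append q).snd = p.snd := by
  rw [snd, getVert_append', if_pos (Nat.one_le_of_lt (not_nil_iff_lt_length.mp hp))]

theorem penultimate_append_of_not_nil (p : G.Walk u v) {q : G.Walk v w} (hq : ¬ q.Nil) :
    (p.append q).penultimate = q.penultimate := by
  have := not_nil_iff_lt_length.mp hq
  rw [penultimate, getVert_append, length_append, if_neg (by omega)]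
  congr 1
  omega

def detour (p : G.Walk u x) (h : G.Adj x y) (m : G.Walk y y) (q : G.Walk x w) : G.Walk u w :=
  p.append (cons h (m.append (cons h.symm q)))

end SimpleGraph.Walk

section NonBacktracking

variable {G : SimpleGraph V} {u v w x y : V}

theorem nonBacktracking_iff_getVert (p : G.Walk u v) :
    NonBacktracking p ↔ ∀ i, i + 2 ≤ p.length → p.getVert i ≠ p.getVert (i + 2) := by
  simp only [NonBacktracking, length_support, Nat.lt_add_one_iff]
  refine forall₂_congr fun i hi => ?_
  rw [← getVert_eq_support_getElem? p (by omega), ← getVert_eq_support_getElem? p hi, ne_eq,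
    Option.some.injEq]

theorem nonBacktracking_cons_iff (h : G.Adj u v) (q : G.Walk v w) :
    NonBacktracking (cons h q) ↔ NonBacktracking q ∧ u ≠ q.snd := by
  simp only [nonBacktracking_iff_getVert, length_cons]
  constructor
  · intro H
    refine ⟨fun i hi => by simpa using H (i + 1) (by omega), ?_⟩
    by_cases hq : q.Nil
    · rw [snd, getVert_of_length_le q (by simp [hq.length_eq_zero]), ← hq.eq]
      exact h.ne
    · simpa using H 0 (by have := not_nil_iff_lt_length.mp hq; omega)
  · rintro ⟨Hq, hu⟩ (_ | i) hi
    · simpa using hu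
    · simpa using Hq i (by omega)

theorem NonBacktracking.append {p : G.Walk u v} {q : G.Walk v w} (hp : NonBacktracking p)
    (hq : NonBacktracking q) (h : p.penultimate ≠ q.snd) : NonBacktracking (p.append q) := by
  induction p with
  | nil => simpa using hq
  | cons h' p ih =>
    rw [nonBacktracking_cons_iff] at hp
    rw [cons_append, nonBacktracking_cons_iff]
    cases p with
    | nil => exact ⟨hq, h⟩
    | cons h'' p =>
      rw [penultimate_cons_of_not_nil _ _ not_nil_cons] at h
      exact ⟨ih hp.1 hq h, snd_append_of_not_nil q not_nil_cons ▸ hp.2⟩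

theorem NonBacktracking.reverse {p : G.Walk u v} (hp : NonBacktracking p) :
    NonBacktracking p.reverse := by
  rw [nonBacktracking_iff_getVert] at hp ⊢
  intro i hi
  rw [length_reverse] at hi
  simpa [getVert_reverse, show p.length - i = p.length - (i + 2) + 2 by omega] using
    (hp (p.length - (i + 2)) (by omega)).symm

theorem SimpleGraph.Walk.IsPath.nonBacktracking {p : G.Walk u v} (hp : p.IsPath) :
    NonBacktracking p := by
  rw [nonBacktracking_iff_getVert]
  intro i hi heq
  have := hp.getVert_injOn (by simp; omega) (by simp; omega) heq
  omega

theorem nonBacktracking_mapLe_iff {H : SimpleGraph V} (hle : G ≤ H) (p : G.Walk u v) :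
    NonBacktracking (p.mapLe hle) ↔ NonBacktracking p := by
  simp only [NonBacktracking, support_mapLe_eq_support]

end NonBacktracking

section WalkWeight

variable {G : SimpleGraph V} (F : Sym2 V → ℝ) {u v w x y : V}

@[simp]
theorem walkWeight_cons (h : G.Adj u v) (p : G.Walk v w) :
    walkWeight F (cons h p) = F s(u, v) + walkWeight F p := by
  simp [walkWeight]

@[simp]
theorem walkWeight_append (p : G.Walk u v) (q : G.Walk v w) :
    walkWeight F (p.append q) = walkWeight F p + walkWeight F q := by
  simp [walkWeight]

@[simp]
theorem walkWeight_reverse (p : G.Walk u v) : walkWeight F p.reverse = walkWeight F p := by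
  simp [walkWeight, List.sum_reverse]

theorem walkWeight_detour (p : G.Walk u x) (h : G.Adj x y) (m : G.Walk y y) (q : G.Walk x w) :
    walkWeight F (p.detour h m q) =
      walkWeight F p + 2 * F s(x, y) + walkWeight F m + walkWeight F q := by
  simp only [Walk.detour, walkWeight_append, walkWeight_cons, Sym2.eq_swap (a := y)]
  ring

end WalkWeight

section Loops

variable {G : SimpleGraph V} {u w x y a b : V}

/-- Closed walks at `b` that can be entered from `a` and left towards `a` without backtracking. -/
structure IsLoopAvoiding (a : V) (c : G.Walk b b) : Prop where
  not_nil : ¬ c.Nil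
  nonBacktracking : NonBacktracking c
  snd_ne : c.snd ≠ a
  penultimate_ne : c.penultimate ≠ a

theorem NonBacktracking.detour {p : G.Walk u x} {m : G.Walk y y} {q : G.Walk x w}
    (hp : NonBacktracking p) (hm : IsLoopAvoiding x m) (hq : NonBacktracking q)
    (hpy : p.penultimate ≠ y) (hqy : q.snd ≠ y) (h : G.Adj x y) :
    NonBacktracking (p.detour h m q) := by
  have hmq : NonBacktracking (m.append (cons h.symm q)) :=
    hm.nonBacktracking.append ((nonBacktracking_cons_iff _ _).2 ⟨hq, hqy.symm⟩)
      (by simpa using hm.penultimate_ne)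
  refine hp.append ((nonBacktracking_cons_iff _ _).2 ⟨hmq, ?_⟩) (by simpa using hpy)
  rw [snd_append_of_not_nil _ hm.not_nil]
  exact hm.snd_ne.symm

theorem IsLoopAvoiding.append {c₁ c₂ : G.Walk b b} (h₁ : IsLoopAvoiding a c₁)
    (h₂ : IsLoopAvoiding a c₂) (h : c₁.penultimate ≠ c₂.snd) :
    IsLoopAvoiding a (c₁.append c₂) where
  not_nil := by simp [h₁.not_nil]
  nonBacktracking := h₁.nonBacktracking.append h₂.nonBacktracking h
  snd_ne := snd_append_of_not_nil c₂ h₁.not_nil ▸ h₁.snd_ne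
  penultimate_ne := penultimate_append_of_not_nil c₁ h₂.not_nil ▸ h₂.penultimate_ne

theorem IsLoopAvoiding.detour {c₁ c₂ : G.Walk b b} {m : G.Walk a a} (h₁ : IsLoopAvoiding a c₁)
    (hm : IsLoopAvoiding b m) (h₂ : IsLoopAvoiding a c₂) (h : G.Adj b a) :
    IsLoopAvoiding a (c₁.detour h m c₂) where
  not_nil := by simp [Walk.detour, h₁.not_nil]
  nonBacktracking := h₁.nonBacktracking.detour hm h₂.nonBacktracking h₁.penultimate_ne
    h₂.snd_ne h
  snd_ne := snd_append_of_not_nil _ h₁.not_nil ▸ h₁.snd_ne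
  penultimate_ne := by
    rw [Walk.detour, penultimate_append_of_not_nil _ not_nil_cons,
      penultimate_cons_of_not_nil _ _ (by simp [hm.not_nil]),
      penultimate_append_of_not_nil _ not_nil_cons, penultimate_cons_of_not_nil _ _ h₂.not_nil]
    exact h₂.penultimate_ne

end Loops

section Reveal

variable {G : SimpleGraph V} {v a b : V}

theorem revealedBySet_of_isLoopAvoiding {P : G.Walk v a} (hP : NonBacktracking P)
    (hPb : P.penultimate ≠ b) (hab : G.Adj a b) {A₁ A₂ : G.Walk a a} (hA₁ : IsLoopAvoiding b A₁)
    (hA₂ : IsLoopAvoiding b A₂) (hA : A₁.penultimate ≠ A₂.snd) {B₁ B₂ : G.Walk b b}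
    (hB₁ : IsLoopAvoiding a B₁) (hB₂ : IsLoopAvoiding a B₂) (hB : B₁.penultimate ≠ B₂.snd) :
    RevealedBySet G {v} s(a, b) := by
  let W (L : G.Walk b b) : G.Walk v v := P.detour hab L P.reverse
  have hW {L : G.Walk b b} (hL : IsLoopAvoiding a L) : NonBacktracking (W L) :=
    hP.detour hL hP.reverse hPb (by rwa [snd_reverse]) hab
  let M (A : G.Walk a a) : G.Walk b b := B₁.detour hab.symm A B₂
  have hM {A : G.Walk a a} (hA : IsLoopAvoiding b A) : IsLoopAvoiding a (M A) :=
    hB₁.detour hA hB₂ hab.symm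
  refine ⟨4, fun _ => v, ![W (B₁.append B₂), W (M A₁), W (M A₂), W (M (A₁.append A₂))],
    ![-1, 1, 1, -1], 2, fun _ => rfl, ?_, by decide, by norm_num, fun F => ?_⟩
  · intro i
    fin_cases i
    exacts [hW (hB₁.append hB₂ hB), hW (hM hA₁), hW (hM hA₂), hW (hM (hA₁.append hA₂ hA))]
  · simp [Fin.sum_univ_four, W, M, walkWeight_detour, Sym2.eq_swap (a := b)]
    ring

end Reveal

namespace SimpleGraph

variable {G : SimpleGraph V} {v a b x y : V}

theorem exists_adj_ne_ne_of_three_le_degree [Fintype V] [DecidableRel G.Adj]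
    (hx : 3 ≤ G.degree x) (y₁ y₂ : V) :
    ∃ z, G.Adj x z ∧ z ≠ y₁ ∧ z ≠ y₂ := by
  classical
  obtain ⟨z, hz, hzy⟩ := Finset.exists_mem_notMem_of_card_lt_card
    (s := {y₁, y₂}) (t := G.neighborFinset x)
    (by rw [card_neighborFinset_eq_degree]; exact Finset.card_le_two.trans_lt hx)
  simp only [Finset.mem_insert, Finset.mem_singleton, not_or] at hzy
  exact ⟨z, (G.mem_neighborFinset x z).1 hz, hzy⟩

theorem exists_deleteEdges_adj_ne_of_three_le_degree [Fintype V] [DecidableRel G.Adj]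
    (hdeg : ∀ x, 3 ≤ G.degree x) (a b x y : V) :
    ∃ z, (G.deleteEdges {s(a, b)}).Adj x z ∧ z ≠ y := by
  classical
  obtain ⟨z, hxz, hzy, hz⟩ :=
    exists_adj_ne_ne_of_three_le_degree (hdeg x) y (if x = b then a else b)
  refine ⟨z, (deleteEdges_adj ..).2 ⟨hxz, ?_⟩, hzy⟩
  split_ifs at hz with hxb
  · subst hxb
    simp [hz, hxz.ne']
  · simp [hxb, hz]

theorem exists_nonBacktracking_loop_of_isPath [Fintype V] {H : SimpleGraph V}
    (hH : ∀ x y, ∃ z, H.Adj x z ∧ z ≠ y) {x w : V} (p : H.Walk x w) (hp : p.IsPath)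
    (hne : ¬ p.Nil) : ∃ c : H.Walk x x, NonBacktracking c ∧ c.snd = p.snd := by
  classical
  by_cases hext : ∃ z, H.Adj w z ∧ z ∉ p.support
  · obtain ⟨z, hwz, hz⟩ := hext
    obtain ⟨c, hc, hcs⟩ :=
      exists_nonBacktracking_loop_of_isPath hH (p.concat hwz) (hp.concat hz hwz)
        (not_nil_iff_lt_length.2 (by simp))
    exact ⟨c, hc, hcs.trans (by rw [concat_eq_append, snd_append_of_not_nil _ hne])⟩
  · -- `p` cannot be extended at `w`, so it closes up through a neighbour `z ≠ p.penultimate` of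
    -- `w` lying on `p`, and returns to `x` along `p`.
    push Not at hext
    obtain ⟨z, hwz, hz⟩ := hH w p.penultimate
    have hzp := hext z hwz
    have hwr : w ≠ (p.takeUntil z hzp).reverse.snd := by
      rw [snd_reverse]
      exact (ne_of_mem_of_not_mem (getVert_mem_support _ _)
        (endpoint_notMem_support_takeUntil hp hzp hwz.ne)).symm
    refine ⟨p.append (cons hwz (p.takeUntil z hzp).reverse), hp.nonBacktracking.append
      ((nonBacktracking_cons_iff _ _).2 ⟨(hp.takeUntil hzp).reverse.nonBacktracking, hwr⟩)
      (by simpa using hz.symm), snd_append_of_not_nil _ hne⟩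
termination_by Fintype.card V - p.length
decreasing_by
  have := (hp.concat hz hwz).length_lt
  simp only [length_concat] at this ⊢
  omega

theorem exists_nonBacktracking_loop [Fintype V] {H : SimpleGraph V}
    (hH : ∀ x y, ∃ z, H.Adj x z ∧ z ≠ y) (hxy : H.Adj x y) :
    ∃ c : H.Walk x x, NonBacktracking c ∧ c.snd = y := by
  simpa using exists_nonBacktracking_loop_of_isPath hH (cons hxy nil) (by simp [hxy.ne])
    not_nil_cons

theorem exists_isLoopAvoiding [Fintype V] [DecidableRel G.Adj] (hdeg : ∀ x, 3 ≤ G.degree x)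
    (hby : G.Adj b y) (hya : y ≠ a) : ∃ c : G.Walk b b, IsLoopAvoiding a c ∧ c.snd = y := by
  have hH : (G.deleteEdges {s(a, b)}).Adj b y := by simp [hby, hya, hby.ne']
  obtain ⟨c, hc, rfl⟩ :=
    exists_nonBacktracking_loop (exists_deleteEdges_adj_ne_of_three_le_degree hdeg a b) hH
  have hcn : ¬ c.Nil := by
    rintro ⟨⟩
    exact hH.ne rfl
  refine ⟨c.mapLe (deleteEdges_le _), ⟨by simpa using hcn, (nonBacktracking_mapLe_iff ..).2 hc,
    by simpa using hya, ?_⟩, by simp⟩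
  have hpen : c.penultimate ≠ a := fun h =>
    ((deleteEdges_adj ..).1 (adj_penultimate hcn)).2 (by simp [h])
  simpa using hpen

theorem exists_isLoopAvoiding_pair [Fintype V] [DecidableRel G.Adj] (hdeg : ∀ x, 3 ≤ G.degree x)
    (a b : V) : ∃ c₁ c₂ : G.Walk b b,
      IsLoopAvoiding a c₁ ∧ IsLoopAvoiding a c₂ ∧ c₁.penultimate ≠ c₂.snd := by
  obtain ⟨y₁, hby₁, hy₁a, -⟩ := exists_adj_ne_ne_of_three_le_degree (hdeg b) a a
  obtain ⟨c₁, hc₁, -⟩ := exists_isLoopAvoiding hdeg hby₁ hy₁a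
  obtain ⟨y₂, hby₂, hy₂a, hy₂⟩ := exists_adj_ne_ne_of_three_le_degree (hdeg b) a c₁.penultimate
  obtain ⟨c₂, hc₂, rfl⟩ := exists_isLoopAvoiding hdeg hby₂ hy₂a
  exact ⟨c₁, c₂, hc₁, hc₂, hy₂.symm⟩

theorem Reachable.exists_isPath_avoiding_other_end (hreach : G.Reachable v a) (hab : a ≠ b) :
    ∃ a' b', s(a', b') = s(a, b) ∧ ∃ P : G.Walk v a', P.IsPath ∧ b' ∉ P.support := by
  classical
  obtain ⟨p, hp⟩ : ∃ p : G.Walk v a, p.IsPath := ⟨_, hreach.some.bypass_isPath⟩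
  by_cases hb : b ∈ p.support
  · exact ⟨b, a, Sym2.eq_swap, p.takeUntil b hb, hp.takeUntil hb,
      endpoint_notMem_support_takeUntil hp hb hab⟩
  · exact ⟨a, b, rfl, p, hp, hb⟩

end SimpleGraph

/-- in a connected graph of minimum degree at least 3, every bridge is revealed
by every vertex. -/
theorem bridge_revealed {G : SimpleGraph V} [Fintype V] [DecidableRel G.Adj]
    (hconn : G.Connected) (hdeg : ∀ x, 3 ≤ G.degree x)
    (v : V) (e : Sym2 V) (hbridge : G.IsBridge e) :
    RevealedBySet G {v} e := by
  induction e using Sym2.ind with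
  | h a₀ b₀ =>
  have hadj : G.Adj a₀ b₀ := hbridge.reachable_iff_adj.mp (hconn.preconnected a₀ b₀)
  obtain ⟨a, b, he, P, hP, hbP⟩ :=
    (hconn.preconnected v a₀).exists_isPath_avoiding_other_end hadj.ne
  have hab : G.Adj a b := by rw [← SimpleGraph.mem_edgeSet, he]; exact hadj
  obtain ⟨A₁, A₂, hA₁, hA₂, hA⟩ := exists_isLoopAvoiding_pair hdeg b a
  obtain ⟨B₁, B₂, hB₁, hB₂, hB⟩ := exists_isLoopAvoiding_pair hdeg a b
  rw [← he]
  exact revealedBySet_of_isLoopAvoiding hP.nonBacktracking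
    (ne_of_mem_of_not_mem (getVert_mem_support _ _) hbP) hab hA₁ hA₂ hA hB₁ hB₂ hB
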